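/- (Harmonic solutions) Fix m, N ∈ ℕ and k ∈ {2,...,N}. Define H^k : ℝ^{⌊N/k⌋+1} → ℝ^{N+1} by (H^k a)_n = a_i if n = i·k for some integer i, and 0 otherwise. If a satisfies the matching equation a = C^{mk}_{⌊N/k⌋}(a), then H^k(a) satisfies the matching equation H^k(a) = C^m_N(H^k(a)). -/

import Mathlib

/-!
Since `H^k a` vanishes off the multiples of `k`, only triples `(ki, kj, kl)` contribute to
`C^m_N(H^k a)_n`. For `k ∤ n` there are none, so both sides vanish. For `n = k n'`, scaling by `k`
is a bijection from the triples of `[-⌊N/k⌋, ⌊N/k⌋]³` summing to `n'` onto them, and it turns the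
sign exponent `m (|i| + |j| - |l| - n')` into `m k (|i| + |j| - |l| - n')`.
-/

/-- The cubic matching map `C^m_N`: component `n` is
`∑_{i+j+k=n, -N ≤ i,j,k ≤ N} (-1)^{m(|i|+|j|-|k|-n)/2} a_{|i|} a_{|j|} a_{|k|}`. -/
noncomputable def cubicMatchSeq (m N : ℕ) (a : ℕ → ℝ) (n : ℤ) : ℝ :=
  ∑ p ∈ (Finset.Icc (-(N : ℤ)) (N : ℤ) ×ˢ Finset.Icc (-(N : ℤ)) (N : ℤ) ×ˢ
      Finset.Icc (-(N : ℤ)) (N : ℤ)).filter (fun p => p.1 + p.2.1 + p.2.2 = n),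
    (-1 : ℝ) ^ (((m : ℤ) * (|p.1| + |p.2.1| - |p.2.2| - n)) / 2) *
      a p.1.natAbs * a p.2.1.natAbs * a p.2.2.natAbs

namespace CubicMatch

noncomputable def triples (N : ℕ) (n : ℤ) : Finset (ℤ × ℤ × ℤ) :=
  (Finset.Icc (-(N : ℤ)) (N : ℤ) ×ˢ Finset.Icc (-(N : ℤ)) (N : ℤ) ×ˢ
      Finset.Icc (-(N : ℤ)) (N : ℤ)).filter (fun p => p.1 + p.2.1 + p.2.2 = n)

noncomputable def term (m : ℕ) (a : ℕ → ℝ) (n : ℤ) (p : ℤ × ℤ × ℤ) : ℝ :=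
  (-1 : ℝ) ^ (((m : ℤ) * (|p.1| + |p.2.1| - |p.2.2| - n)) / 2) *
    a p.1.natAbs * a p.2.1.natAbs * a p.2.2.natAbs

theorem cubicMatchSeq_eq_sum (m N : ℕ) (a : ℕ → ℝ) (n : ℤ) :
    cubicMatchSeq m N a n = ∑ p ∈ triples N n, term m a n p :=
  rfl

theorem mem_triples {N : ℕ} {n : ℤ} {p : ℤ × ℤ × ℤ} :
    p ∈ triples N n ↔ (|p.1| ≤ N ∧ |p.2.1| ≤ N ∧ |p.2.2| ≤ N) ∧ p.1 + p.2.1 + p.2.2 = n := by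
  simp only [triples, Finset.mem_filter, Finset.mem_product, Finset.mem_Icc, abs_le]

end CubicMatch

open CubicMatch

/-- The embedding `H^k` of the paper. -/
def harmonicEmbed (k : ℕ) (a : ℕ → ℝ) (j : ℕ) : ℝ :=
  if k ∣ j then a (j / k) else 0

section harmonicEmbed

variable {k : ℕ} {a : ℕ → ℝ}

theorem harmonicEmbed_mul (hk : 0 < k) (i : ℕ) : harmonicEmbed k a (k * i) = a i := by
  simp [harmonicEmbed, Nat.mul_div_cancel_left _ hk]

theorem harmonicEmbed_of_not_dvd {j : ℕ} (h : ¬ k ∣ j) : harmonicEmbed k a j = 0 :=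
  if_neg h

theorem harmonicEmbed_natAbs_mul (hk : 0 < k) (z : ℤ) :
    harmonicEmbed k a ((k : ℤ) * z).natAbs = a z.natAbs := by
  rw [Int.natAbs_mul, Int.natAbs_natCast, harmonicEmbed_mul hk]

theorem harmonicEmbed_natAbs_of_not_dvd {z : ℤ} (h : ¬ (k : ℤ) ∣ z) :
    harmonicEmbed k a z.natAbs = 0 :=
  harmonicEmbed_of_not_dvd (mt Int.natCast_dvd.mpr h)

theorem term_harmonicEmbed_eq_zero (m : ℕ) (n : ℤ) {p : ℤ × ℤ × ℤ}
    (hp : ¬ ((k : ℤ) ∣ p.1 ∧ (k : ℤ) ∣ p.2.1 ∧ (k : ℤ) ∣ p.2.2)) :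
    term m (harmonicEmbed k a) n p = 0 := by
  simp only [not_and_or] at hp
  rcases hp with h | h | h <;> simp [term, harmonicEmbed_natAbs_of_not_dvd h]

theorem term_harmonicEmbed_smul (hk : 0 < k) (m : ℕ) (n : ℤ) (p : ℤ × ℤ × ℤ) :
    term m (harmonicEmbed k a) (k * n) ((k : ℤ) • p) = term (m * k) a n p := by
  have hk' : (0 : ℤ) < k := by exact_mod_cast hk
  have hexp : (m : ℤ) * (|k * p.1| + |k * p.2.1| - |k * p.2.2| - k * n)
      = ((m * k : ℕ) : ℤ) * (|p.1| + |p.2.1| - |p.2.2| - n) := by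
    simp only [abs_mul, abs_of_pos hk']
    push_cast
    ring
  simp only [term, Prod.smul_fst, Prod.smul_snd, smul_eq_mul, harmonicEmbed_natAbs_mul hk, hexp]

end harmonicEmbed

theorem Int.abs_natCast_mul_le_iff {k : ℕ} (hk : 0 < k) (N : ℕ) (z : ℤ) :
    |(k : ℤ) * z| ≤ N ↔ |z| ≤ (N / k : ℕ) := by
  have hk' : (0 : ℤ) < k := by exact_mod_cast hk
  rw [abs_mul, abs_of_pos hk', Int.natCast_div, Int.le_ediv_iff_mul_le hk', mul_comm]

theorem smul_mem_triples_iff {k : ℕ} (hk : 0 < k) (N : ℕ) (n : ℤ) (p : ℤ × ℤ × ℤ) :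
    (k : ℤ) • p ∈ triples N (k * n) ↔ p ∈ triples (N / k) n := by
  have hk' : (k : ℤ) ≠ 0 := by exact_mod_cast hk.ne'
  simp only [mem_triples, Prod.smul_fst, Prod.smul_snd, smul_eq_mul,
    Int.abs_natCast_mul_le_iff hk, ← mul_add, mul_right_inj' hk']

theorem cubicMatchSeq_harmonicEmbed_mul {k : ℕ} (hk : 0 < k) (m N : ℕ) (a : ℕ → ℝ) (n : ℤ) :
    cubicMatchSeq m N (harmonicEmbed k a) (k * n) = cubicMatchSeq (m * k) (N / k) a n := by
  have hinj : Set.InjOn (fun p : ℤ × ℤ × ℤ => (k : ℤ) • p) ↑(triples (N / k) n) :=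
    (smul_right_injective _ (by exact_mod_cast hk.ne')).injOn
  rw [cubicMatchSeq_eq_sum, cubicMatchSeq_eq_sum]
  symm
  calc ∑ p ∈ triples (N / k) n, term (m * k) a n p
      = ∑ p ∈ triples (N / k) n, term m (harmonicEmbed k a) (k * n) ((k : ℤ) • p) :=
        Finset.sum_congr rfl fun p _ => (term_harmonicEmbed_smul hk m n p).symm
    _ = ∑ q ∈ (triples (N / k) n).image ((k : ℤ) • ·), term m (harmonicEmbed k a) (k * n) q :=
        (Finset.sum_image hinj).symm
    _ = ∑ q ∈ triples N (k * n), term m (harmonicEmbed k a) (k * n) q := by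
      refine Finset.sum_subset ?_ fun q hq hq' => term_harmonicEmbed_eq_zero m _ ?_
      · rintro _ hq
        obtain ⟨p, hp, rfl⟩ := Finset.mem_image.mp hq
        exact (smul_mem_triples_iff hk N n p).mpr hp
      · obtain ⟨i, j, l⟩ := q
        rintro ⟨⟨i, rfl⟩, ⟨j, rfl⟩, ⟨l, rfl⟩⟩
        exact hq' (Finset.mem_image.mpr ⟨(i, j, l), (smul_mem_triples_iff hk N n _).mp hq, rfl⟩)

theorem cubicMatchSeq_harmonicEmbed_of_not_dvd {k : ℕ} (m N : ℕ) (a : ℕ → ℝ) {n : ℤ}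
    (hn : ¬ (k : ℤ) ∣ n) : cubicMatchSeq m N (harmonicEmbed k a) n = 0 := by
  refine Finset.sum_eq_zero fun p hp => term_harmonicEmbed_eq_zero m n fun ⟨hi, hj, hl⟩ => hn ?_
  rw [← (mem_triples.mp hp).2]
  exact (hi.add hj).add hl

theorem stmt_14_general (m N k : ℕ) (hk : 2 ≤ k) (a : ℕ → ℝ)
    (ha : ∀ n : ℕ, n ≤ N / k → a n = cubicMatchSeq (m * k) (N / k) a (n : ℤ)) :
    ∀ n : ℕ, n ≤ N →
      (fun j : ℕ => if k ∣ j then a (j / k) else 0) n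
        = cubicMatchSeq m N (fun j : ℕ => if k ∣ j then a (j / k) else 0) (n : ℤ) := by
  intro n hn
  change harmonicEmbed k a n = cubicMatchSeq m N (harmonicEmbed k a) n
  have hk0 : 0 < k := by omega
  by_cases hdvd : k ∣ n
  · obtain ⟨i, rfl⟩ := hdvd
    have hi : i ≤ N / k := (Nat.le_div_iff_mul_le hk0).mpr (by rwa [mul_comm])
    rw [harmonicEmbed_mul hk0, ha i hi, Nat.cast_mul, cubicMatchSeq_harmonicEmbed_mul hk0]
  · rw [harmonicEmbed_of_not_dvd hdvd,
      cubicMatchSeq_harmonicEmbed_of_not_dvd m N a (mt Int.natCast_dvd_natCast.mp hdvd)]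

/-- Harmonic solutions: if `a` solves the matching equation at order
`(mk, ⌊N/k⌋)`, then its embedding `H^k(a)` (placing `a_i` at index `ik` and
zeros elsewhere) solves the matching equation at order `(m, N)`. -/
theorem stmt_14 (m N k : ℕ) (hk : 2 ≤ k) (hkN : k ≤ N) (a : ℕ → ℝ)
    (ha : ∀ n : ℕ, n ≤ N / k → a n = cubicMatchSeq (m * k) (N / k) a (n : ℤ)) :
    ∀ n : ℕ, n ≤ N →
      (fun j : ℕ => if k ∣ j then a (j / k) else 0) n
        = cubicMatchSeq m N (fun j : ℕ => if k ∣ j then a (j / k) else 0) (n : ℤ) :=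
  stmt_14_general m N k hk a ha
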